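/- Let r > 2, c > 0, C₁ > 0, and β ∈ ℂ. There exists a constant C > 0, depending only on r, c, C₁, and |β|, with the following property. Let γ ∈ ℂ with 0 < |γ| ≤ 1, and let ν⁻, ν⁺ ∈ ℂ satisfy |ν⁻| ≤ C₁|γ|, |ν⁺| ≤ C₁|γ|, Re ν⁻ ≤ −c|γ|, and Re ν⁺ ≥ c|γ|. Define H : ℝ → ℂ by H(ξ) = (β ν⁻/γ) e^{ν⁻ ξ} for ξ ≥ 0 and H(ξ) = (β ν⁺/γ) e^{ν⁺ ξ} for ξ < 0. Then for every odd measurable g : ℝ → ℝ with |g(y)| ≤ M⟨y⟩^{−r} for all y ∈ ℝ, one has sup_{x ∈ ℝ} ⟨x⟩^r |∫_ℝ H(x−y) g(y) dy| ≤ C M |γ|^{1−r}. -/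

import Mathlib

/-!
Put `a = c‖γ‖`. Both branches of `H` are bounded by `‖β‖C₁ e^{-a|ξ|}`, which alone only gives
the rate `‖γ‖^{-r}`; the extra factor `‖γ‖` comes from the oddness of `g`:
`∫ H(x-y) g(y) dy = ½ ∫ (H(x-y) - H(x+y)) g(y) dy`. For `|y| < |x|` the points `x ± y` lie on
the same branch of `H`, so by the mean value theorem the difference is at most
`‖β‖C₁ · 2C₁‖γ‖ |y| e^{-a(|x|-|y|)}`. Where `2|y| < |x|` this is `O(‖γ‖ e^{-a|x|/2})` times
`|y| ⟨y⟩^{-r} ≤ ⟨y⟩^{1-r}`, integrable as `r > 2`, and `⟨x⟩^r e^{-a|x|/2} = O(a^{-r})`.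
Where `2|y| ≥ |x|` we use `⟨y⟩^{-r} ≤ 2^r ⟨x⟩^{-r}` and `∫ e^{-a|x ∓ y|} dy = 2/a`, which
costs only `‖γ‖^{-1} ≤ ‖γ‖^{1-r}`.
-/


open MeasureTheory Set Real

lemma one_le_sqrt_one_add_sq (y : ℝ) : 1 ≤ √(1 + y ^ 2) :=
  Real.one_le_sqrt.2 (by nlinarith)

lemma abs_le_sqrt_one_add_sq (y : ℝ) : |y| ≤ √(1 + y ^ 2) :=
  Real.abs_le_sqrt (by linarith)

lemma sqrt_one_add_sq_le_two_mul {x y : ℝ} (h : |x| ≤ 2 * |y|) :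
    √(1 + x ^ 2) ≤ 2 * √(1 + y ^ 2) := by
  have hxy : x ^ 2 ≤ (2 * y) ^ 2 := by
    rw [← sq_abs x, ← sq_abs (2 * y), abs_mul, abs_two]
    exact pow_le_pow_left₀ (abs_nonneg x) h 2
  rw [show (2 : ℝ) = √(2 ^ 2) by simp, ← Real.sqrt_mul (by norm_num)]
  exact Real.sqrt_le_sqrt (by nlinarith)

lemma sqrt_one_add_sq_rpow_neg_le {x y r : ℝ} (h : |x| ≤ 2 * |y|) (hr : 0 ≤ r) :
    √(1 + y ^ 2) ^ (-r) ≤ 2 ^ r * √(1 + x ^ 2) ^ (-r) := by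
  have hx := one_le_sqrt_one_add_sq x
  calc √(1 + y ^ 2) ^ (-r) ≤ (√(1 + x ^ 2) / 2) ^ (-r) :=
        Real.rpow_le_rpow_of_nonpos (by positivity)
          (by linarith [sqrt_one_add_sq_le_two_mul h]) (by linarith)
    _ = 2 ^ r * √(1 + x ^ 2) ^ (-r) := by
        rw [Real.div_rpow (by positivity) zero_le_two, Real.rpow_neg zero_le_two, div_inv_eq_mul,
          mul_comm]

lemma abs_mul_sqrt_one_add_sq_rpow_neg_le (y r : ℝ) :
    |y| * √(1 + y ^ 2) ^ (-r) ≤ √(1 + y ^ 2) ^ (1 - r) := by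
  have hy := one_le_sqrt_one_add_sq y
  rw [sub_eq_add_neg, Real.rpow_add (by positivity), Real.rpow_one]
  exact mul_le_mul_of_nonneg_right (abs_le_sqrt_one_add_sq y) (by positivity)

lemma sqrt_one_add_sq_rpow (y s : ℝ) : √(1 + y ^ 2) ^ s = (1 + ‖y‖ ^ 2) ^ (s / 2) := by
  rw [Real.norm_eq_abs, sq_abs, Real.sqrt_eq_rpow, ← Real.rpow_mul (by positivity)]
  ring_nf

lemma integrable_sqrt_one_add_sq_rpow_neg {s : ℝ} (hs : 1 < s) :
    Integrable fun y : ℝ ↦ √(1 + y ^ 2) ^ (-s) := by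
  simp_rw [sqrt_one_add_sq_rpow]
  exact integrable_rpow_neg_one_add_norm_sq (E := ℝ) (μ := volume) (by simpa using hs)

lemma one_add_div_rpow_le_exp {u r : ℝ} (hu : 0 ≤ u) (hr : 0 < r) : (1 + u / r) ^ r ≤ exp u := by
  calc (1 + u / r) ^ r ≤ exp (u / r) ^ r :=
        Real.rpow_le_rpow (by positivity) (by linarith [add_one_le_exp (u / r)]) hr.le
    _ = exp u := by rw [← Real.exp_mul, div_mul_cancel₀ u hr.ne']

lemma sqrt_one_add_sq_rpow_mul_exp_le {r a : ℝ} (hr : 0 < r) (ha : 0 < a) (x : ℝ) :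
    √(1 + x ^ 2) ^ r * exp (-(a * |x| / 2)) ≤ (1 + 2 * r / a) ^ r := by
  have hx : √(1 + x ^ 2) ≤ (1 + 2 * r / a) * (1 + a * |x| / 2 / r) := by
    calc √(1 + x ^ 2) ≤ 1 + |x| := by simpa using sqrt_one_add_norm_sq_le x
      _ ≤ (1 + 2 * r / a) * (1 + a * |x| / 2 / r) := by
        have : 2 * r / a * (a * |x| / 2 / r) = |x| := by field_simp
        nlinarith [abs_nonneg x, show 0 ≤ 2 * r / a * 1 by positivity,
          show 0 ≤ a * |x| / 2 / r by positivity]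
  calc √(1 + x ^ 2) ^ r * exp (-(a * |x| / 2))
      ≤ ((1 + 2 * r / a) ^ r * (1 + a * |x| / 2 / r) ^ r) * exp (-(a * |x| / 2)) := by
        rw [← Real.mul_rpow (by positivity) (by positivity)]
        gcongr
    _ ≤ (1 + 2 * r / a) ^ r * exp (a * |x| / 2) * exp (-(a * |x| / 2)) := by
        gcongr
        exact one_add_div_rpow_le_exp (by positivity) hr
    _ = (1 + 2 * r / a) ^ r := by rw [mul_assoc, ← Real.exp_add]; simp

lemma integral_exp_neg_mul_abs {a : ℝ} (ha : 0 < a) : ∫ y, exp (-(a * |y|)) = 2 / a := by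
  rw [integral_comp_abs (f := fun u ↦ exp (-(a * u))),
    integral_comp_mul_left_Ioi (fun u ↦ exp (-u)) 0 ha, mul_zero, integral_exp_neg_Ioi_zero,
    smul_eq_mul]
  field_simp

lemma integrable_exp_neg_mul_abs {a : ℝ} (ha : 0 < a) : Integrable fun y : ℝ ↦ exp (-(a * |y|)) :=
  .of_integral_ne_zero (by rw [integral_exp_neg_mul_abs ha]; positivity)

lemma norm_cexp_mul_sub_cexp_mul_le (ν : ℂ) {p q m : ℝ} (hm : ∀ s ∈ uIcc p q, ν.re * s ≤ m) :
    ‖Complex.exp (ν * p) - Complex.exp (ν * q)‖ ≤ ‖ν‖ * exp m * |p - q| := by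
  have hderiv : ∀ s ∈ uIcc p q, HasDerivWithinAt (fun s : ℝ ↦ Complex.exp (ν * s))
      (Complex.exp (ν * s) * ν) (uIcc p q) s := fun s _ ↦ by
    simpa using ((Complex.ofRealCLM.hasDerivAt (x := s)).const_mul ν).cexp.hasDerivWithinAt
  have hbound : ∀ s ∈ uIcc p q, ‖Complex.exp (ν * s) * ν‖ ≤ ‖ν‖ * exp m := fun s hs ↦ by
    rw [norm_mul, Complex.norm_exp, Complex.re_mul_ofReal, mul_comm]
    gcongr
    exact hm s hs
  simpa [Real.norm_eq_abs] using
    (convex_uIcc p q).norm_image_sub_le_of_norm_hasDerivWithin_le hderiv hbound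
      right_mem_uIcc left_mem_uIcc

lemma two_mul_norm_integral_le_integral_norm_add_comp_neg {E : Type*} [NormedAddCommGroup E]
    [NormedSpace ℝ E] {F : ℝ → E} (hF : Integrable F) :
    2 * ‖∫ y, F y‖ ≤ ∫ y, ‖F y + F (-y)‖ := by
  calc 2 * ‖∫ y, F y‖ = ‖(∫ y, F y) + ∫ y, F (-y)‖ := by
        rw [integral_neg_eq_self, ← two_smul ℝ, norm_smul, Real.norm_two]
    _ = ‖∫ y, (F y + F (-y))‖ := by rw [integral_add hF hF.comp_neg]
    _ ≤ ∫ y, ‖F y + F (-y)‖ := norm_integral_le_integral_norm _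

section OddConvolution

variable {K : ℝ → ℂ} {g : ℝ → ℝ} {A L a M r : ℝ}

lemma norm_sub_mul_abs_le_of_kernel_bounds
    (hA : ∀ ξ, ‖K ξ‖ ≤ A * exp (-(a * |ξ|)))
    (hL : ∀ x y, |y| < |x| → ‖K (x - y) - K (x + y)‖ ≤ L * |y| * exp (-(a * (|x| - |y|))))
    (hL₀ : 0 ≤ L) (ha : 0 ≤ a) (hM : 0 ≤ M) (hr : 0 ≤ r)
    (hgM : ∀ y, |g y| ≤ M * √(1 + y ^ 2) ^ (-r)) (x y : ℝ) :
    ‖K (x - y) - K (x + y)‖ * |g y| ≤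
      L * M * exp (-(a * |x| / 2)) * √(1 + y ^ 2) ^ (1 - r) +
        2 ^ r * A * M * √(1 + x ^ 2) ^ (-r) * (exp (-(a * |x - y|)) + exp (-(a * |x + y|))) := by
  have hA₀ : 0 ≤ A := by simpa using (norm_nonneg _).trans (hA 0)
  have hfar_nonneg : 0 ≤ 2 ^ r * A * M * √(1 + x ^ 2) ^ (-r) *
      (exp (-(a * |x - y|)) + exp (-(a * |x + y|))) := by positivity
  have hnear_nonneg : 0 ≤ L * M * exp (-(a * |x| / 2)) * √(1 + y ^ 2) ^ (1 - r) := by positivity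
  by_cases hy : 2 * |y| < |x|
  · have hexp : exp (-(a * (|x| - |y|))) ≤ exp (-(a * |x| / 2)) := by
      gcongr; nlinarith
    calc ‖K (x - y) - K (x + y)‖ * |g y|
        ≤ (L * |y| * exp (-(a * (|x| - |y|)))) * (M * √(1 + y ^ 2) ^ (-r)) :=
          mul_le_mul (hL x y (by linarith [abs_nonneg y])) (hgM y) (abs_nonneg _)
            (by positivity)
      _ = L * M * exp (-(a * (|x| - |y|))) * (|y| * √(1 + y ^ 2) ^ (-r)) := by ring
      _ ≤ L * M * exp (-(a * |x| / 2)) * √(1 + y ^ 2) ^ (1 - r) := by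
          gcongr; exact abs_mul_sqrt_one_add_sq_rpow_neg_le y r
      _ ≤ _ := le_add_of_nonneg_right hfar_nonneg
  · have hg : |g y| ≤ M * (2 ^ r * √(1 + x ^ 2) ^ (-r)) :=
      (hgM y).trans (by gcongr; exact sqrt_one_add_sq_rpow_neg_le (by linarith) hr)
    calc ‖K (x - y) - K (x + y)‖ * |g y|
        ≤ (A * exp (-(a * |x - y|)) + A * exp (-(a * |x + y|))) *
            (M * (2 ^ r * √(1 + x ^ 2) ^ (-r))) :=
          mul_le_mul ((norm_sub_le _ _).trans (add_le_add (hA _) (hA _))) hg (abs_nonneg _)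
            (by positivity)
      _ = 2 ^ r * A * M * √(1 + x ^ 2) ^ (-r) *
            (exp (-(a * |x - y|)) + exp (-(a * |x + y|))) := by ring
      _ ≤ _ := le_add_of_nonneg_left hnear_nonneg

lemma integrable_comp_sub_mul (hK : Measurable K) (hA : ∀ ξ, ‖K ξ‖ ≤ A * exp (-(a * |ξ|)))
    (ha : 0 ≤ a) (hr : 1 < r) (hg : Measurable g) (hgM : ∀ y, |g y| ≤ M * √(1 + y ^ 2) ^ (-r))
    (x : ℝ) : Integrable fun y ↦ K (x - y) * g y := by
  have hA₀ : 0 ≤ A := by simpa using (norm_nonneg _).trans (hA 0)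
  refine ((integrable_sqrt_one_add_sq_rpow_neg hr).const_mul (A * M)).mono' (by fun_prop)
    (.of_forall fun y ↦ ?_)
  rw [norm_mul, Complex.norm_real, Real.norm_eq_abs, mul_assoc]
  refine mul_le_mul ((hA _).trans ?_) (hgM y) (abs_nonneg _) (by positivity)
  exact mul_le_of_le_one_right hA₀ (exp_le_one_iff.2 (by simp only [neg_nonpos]; positivity))

lemma two_mul_norm_integral_comp_sub_mul_le_of_odd
    (hK : Measurable K) (hA : ∀ ξ, ‖K ξ‖ ≤ A * exp (-(a * |ξ|)))
    (hL : ∀ x y, |y| < |x| → ‖K (x - y) - K (x + y)‖ ≤ L * |y| * exp (-(a * (|x| - |y|))))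
    (hL₀ : 0 ≤ L) (ha : 0 < a) (hM : 0 ≤ M) (hr : 2 < r) (hg : Measurable g)
    (hodd : ∀ y, g (-y) = -g y) (hgM : ∀ y, |g y| ≤ M * √(1 + y ^ 2) ^ (-r)) (x : ℝ) :
    2 * ‖∫ y, K (x - y) * g y‖ ≤
      L * M * exp (-(a * |x| / 2)) * (∫ y, √(1 + y ^ 2) ^ (1 - r)) +
        2 ^ r * A * M * √(1 + x ^ 2) ^ (-r) * (2 / a + 2 / a) := by
  have hJ : Integrable fun y : ℝ ↦ √(1 + y ^ 2) ^ (1 - r) := by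
    simpa using integrable_sqrt_one_add_sq_rpow_neg (s := r - 1) (by linarith)
  have hE : Integrable fun y : ℝ ↦ exp (-(a * |y|)) := integrable_exp_neg_mul_abs ha
  have hE₂ : Integrable fun y ↦ exp (-(a * |x - y|)) + exp (-(a * |x + y|)) :=
    (hE.comp_sub_left x).add (hE.comp_add_left x)
  have hsym : ∀ y, K (x - y) * g y + K (x - -y) * g (-y) = (K (x - y) - K (x + y)) * g y := by
    intro y; rw [hodd, sub_neg_eq_add]; push_cast; ring
  calc 2 * ‖∫ y, K (x - y) * g y‖ ≤ ∫ y, ‖K (x - y) * g y + K (x - -y) * g (-y)‖ :=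
        two_mul_norm_integral_le_integral_norm_add_comp_neg
          (integrable_comp_sub_mul hK hA ha.le (by linarith) hg hgM x)
    _ ≤ ∫ y, (L * M * exp (-(a * |x| / 2)) * √(1 + y ^ 2) ^ (1 - r) +
          2 ^ r * A * M * √(1 + x ^ 2) ^ (-r) *
            (exp (-(a * |x - y|)) + exp (-(a * |x + y|)))) := by
        refine integral_mono_of_nonneg (.of_forall fun _ ↦ norm_nonneg _)
          ((hJ.const_mul _).add (hE₂.const_mul _)) (.of_forall fun y ↦ ?_)
        simpa only [hsym, norm_mul, Complex.norm_real, Real.norm_eq_abs] using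
          norm_sub_mul_abs_le_of_kernel_bounds hA hL hL₀ ha.le hM (by linarith) hgM x y
    _ = _ := by
        rw [integral_add (hJ.const_mul _) (hE₂.const_mul _), integral_const_mul,
          integral_const_mul, integral_add (hE.comp_sub_left x) (hE.comp_add_left x),
          integral_sub_left_eq_self (fun y ↦ exp (-(a * |y|))),
          integral_add_left_eq_self (fun y ↦ exp (-(a * |y|))), integral_exp_neg_mul_abs ha]

theorem sqrt_one_add_sq_rpow_mul_norm_integral_le_of_odd
    (hK : Measurable K) (hA : ∀ ξ, ‖K ξ‖ ≤ A * exp (-(a * |ξ|)))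
    (hL : ∀ x y, |y| < |x| → ‖K (x - y) - K (x + y)‖ ≤ L * |y| * exp (-(a * (|x| - |y|))))
    (hL₀ : 0 ≤ L) (ha : 0 < a) (hM : 0 ≤ M) (hr : 2 < r) (hg : Measurable g)
    (hodd : ∀ y, g (-y) = -g y) (hgM : ∀ y, |g y| ≤ M * √(1 + y ^ 2) ^ (-r)) (x : ℝ) :
    √(1 + x ^ 2) ^ r * ‖∫ y, K (x - y) * g y‖ ≤
      M * (L * (∫ y, √(1 + y ^ 2) ^ (1 - r)) * (1 + 2 * r / a) ^ r / 2 + 2 ^ (r + 1) * A / a) := by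
  set J := ∫ y, √(1 + y ^ 2) ^ (1 - r)
  have hJ₀ : 0 ≤ J := integral_nonneg fun y ↦ by positivity
  have hx : 0 < √(1 + x ^ 2) ^ r := by positivity
  have h2 := two_mul_norm_integral_comp_sub_mul_le_of_odd hK hA hL hL₀ ha hM hr hg hodd hgM x
  calc √(1 + x ^ 2) ^ r * ‖∫ y, K (x - y) * g y‖
      ≤ √(1 + x ^ 2) ^ r * (L * M * exp (-(a * |x| / 2)) * J +
          2 ^ r * A * M * √(1 + x ^ 2) ^ (-r) * (2 / a + 2 / a)) / 2 := by
        rw [mul_div_assoc]; gcongr; linarith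
    _ = M * (L * J * (√(1 + x ^ 2) ^ r * exp (-(a * |x| / 2))) / 2 + 2 ^ (r + 1) * A / a) := by
        rw [Real.rpow_neg (by positivity), Real.rpow_add_one two_ne_zero]
        field_simp
        ring
    _ ≤ M * (L * J * (1 + 2 * r / a) ^ r / 2 + 2 ^ (r + 1) * A / a) := by
        gcongr
        exact sqrt_one_add_sq_rpow_mul_exp_le (by linarith) ha x

end OddConvolution

/-- The kernel `H`. -/
noncomputable def poleKernel (β γ νm νp : ℂ) (ξ : ℝ) : ℂ :=
  if 0 ≤ ξ then β * νm / γ * Complex.exp (νm * ξ) else β * νp / γ * Complex.exp (νp * ξ)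

section PoleKernel

variable {β γ νm νp : ℂ} {c C₁ : ℝ}

lemma measurable_poleKernel : Measurable (poleKernel β γ νm νp) :=
  Measurable.ite measurableSet_Ici (by fun_prop) (by fun_prop)

lemma norm_mul_div_le_of_norm_le {ν : ℂ} (hγ : 0 < ‖γ‖) (hν : ‖ν‖ ≤ C₁ * ‖γ‖) :
    ‖β * ν / γ‖ ≤ ‖β‖ * C₁ := by
  rw [norm_div, norm_mul, mul_div_assoc]
  gcongr
  rwa [div_le_iff₀ hγ]

lemma norm_mul_cexp_le {ν : ℂ} (hγ : 0 < ‖γ‖) (hν : ‖ν‖ ≤ C₁ * ‖γ‖) {ξ m : ℝ}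
    (hm : ν.re * ξ ≤ m) : ‖β * ν / γ * Complex.exp (ν * ξ)‖ ≤ ‖β‖ * C₁ * exp m := by
  have hcoeff := norm_mul_div_le_of_norm_le (β := β) hγ hν
  rw [norm_mul, Complex.norm_exp, Complex.re_mul_ofReal]
  exact mul_le_mul hcoeff (exp_le_exp.2 hm) (by positivity) ((norm_nonneg _).trans hcoeff)

lemma norm_poleKernel_le (hγ : 0 < ‖γ‖) (hνm : ‖νm‖ ≤ C₁ * ‖γ‖) (hνp : ‖νp‖ ≤ C₁ * ‖γ‖)
    (hνm_re : νm.re ≤ -c * ‖γ‖) (hνp_re : c * ‖γ‖ ≤ νp.re) (ξ : ℝ) :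
    ‖poleKernel β γ νm νp ξ‖ ≤ ‖β‖ * C₁ * exp (-(c * ‖γ‖ * |ξ|)) := by
  unfold poleKernel
  split_ifs with hξ
  · refine norm_mul_cexp_le hγ hνm ?_
    rw [abs_of_nonneg hξ]
    nlinarith [mul_le_mul_of_nonneg_right hνm_re hξ]
  · refine norm_mul_cexp_le hγ hνp ?_
    rw [abs_of_neg (not_le.1 hξ)]
    nlinarith [mul_le_mul_of_nonpos_right hνp_re (not_le.1 hξ).le]

lemma norm_mul_cexp_sub_mul_cexp_le {ν : ℂ} {x y m : ℝ} (hγ : 0 < ‖γ‖) (hν : ‖ν‖ ≤ C₁ * ‖γ‖)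
    (hm : ∀ s, x - |y| ≤ s → s ≤ x + |y| → ν.re * s ≤ m) :
    ‖β * ν / γ * Complex.exp (ν * ↑(x - y)) - β * ν / γ * Complex.exp (ν * ↑(x + y))‖ ≤
      ‖β‖ * C₁ * (2 * C₁ * ‖γ‖) * |y| * exp m := by
  have hy₁ := neg_abs_le y
  have hy₂ := le_abs_self y
  have hdiff := norm_cexp_mul_sub_cexp_mul_le ν (p := x - y) (q := x + y) (m := m) fun s hs ↦ by
    rcases mem_uIcc.1 hs with h | h <;> exact hm s (by linarith) (by linarith)
  rw [show x - y - (x + y) = -(2 * y) by ring, abs_neg, abs_mul, abs_two] at hdiff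
  have hcoeff : ‖β * ν / γ‖ ≤ ‖β‖ * C₁ := norm_mul_div_le_of_norm_le hγ hν
  rw [← mul_sub, norm_mul]
  calc ‖β * ν / γ‖ * ‖Complex.exp (ν * ↑(x - y)) - Complex.exp (ν * ↑(x + y))‖
      ≤ (‖β‖ * C₁) * (C₁ * ‖γ‖ * exp m * (2 * |y|)) :=
        mul_le_mul hcoeff (hdiff.trans (by gcongr)) (norm_nonneg _) ((norm_nonneg _).trans hcoeff)
    _ = ‖β‖ * C₁ * (2 * C₁ * ‖γ‖) * |y| * exp m := by ring

lemma norm_poleKernel_sub_le (hγ : 0 < ‖γ‖) (hνm : ‖νm‖ ≤ C₁ * ‖γ‖) (hνp : ‖νp‖ ≤ C₁ * ‖γ‖)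
    (hνm_re : νm.re ≤ -c * ‖γ‖) (hνp_re : c * ‖γ‖ ≤ νp.re) (hc : 0 ≤ c) {x y : ℝ}
    (hy : |y| < |x|) :
    ‖poleKernel β γ νm νp (x - y) - poleKernel β γ νm νp (x + y)‖ ≤
      ‖β‖ * C₁ * (2 * C₁ * ‖γ‖) * |y| * exp (-(c * ‖γ‖ * (|x| - |y|))) := by
  have hy₁ := neg_abs_le y
  have hy₂ := le_abs_self y
  have hcγ : 0 ≤ c * ‖γ‖ := by positivity
  unfold poleKernel
  rcases le_or_gt 0 x with hx | hx
  · rw [abs_of_nonneg hx] at hy ⊢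
    rw [if_pos (by linarith), if_pos (by linarith)]
    refine norm_mul_cexp_sub_mul_cexp_le hγ hνm fun s hs _ ↦ ?_
    nlinarith [mul_le_mul_of_nonneg_right hνm_re (by linarith : (0 : ℝ) ≤ s)]
  · rw [abs_of_neg hx] at hy ⊢
    rw [if_neg (by linarith), if_neg (by linarith)]
    refine norm_mul_cexp_sub_mul_cexp_le hγ hνp fun s _ hs ↦ ?_
    nlinarith [mul_le_mul_of_nonpos_right hνp_re (by linarith : s ≤ 0)]

end PoleKernel

lemma mul_one_add_div_rpow_le {s b r : ℝ} (hs : 0 < s) (hs₁ : s ≤ 1) (hb : 0 ≤ b) (hr : 0 ≤ r) :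
    s * (1 + b / s) ^ r ≤ (1 + b) ^ r * s ^ (1 - r) := by
  have h : 1 + b / s ≤ (1 + b) / s := by
    rw [add_div]; gcongr; exact one_le_one_div hs hs₁
  calc s * (1 + b / s) ^ r ≤ s * ((1 + b) / s) ^ r := by gcongr
    _ = (1 + b) ^ r * s ^ (1 - r) := by
      rw [Real.div_rpow (by positivity) hs.le, sub_eq_add_neg, Real.rpow_add hs, Real.rpow_one,
        Real.rpow_neg hs.le]
      ring

/-- Lemma 3.4 (weighted `L^∞` estimate): blowup of order `|γ|^{1-r}` of the derivative of
the principal resolvent part when no localization is given up. Here `⟨x⟩ = (1+x²)^{1/2}`. -/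
theorem stmt_5 (r c C₁ : ℝ) (hr : 2 < r) (hc : 0 < c) (hC₁ : 0 < C₁) (β : ℂ) :
    ∃ C > (0:ℝ), ∀ (γ νm νp : ℂ), 0 < ‖γ‖ → ‖γ‖ ≤ 1 →
      ‖νm‖ ≤ C₁ * ‖γ‖ →
      ‖νp‖ ≤ C₁ * ‖γ‖ →
      νm.re ≤ -c * ‖γ‖ →
      c * ‖γ‖ ≤ νp.re →
      ∀ (M : ℝ) (g : ℝ → ℝ), 0 < M → Measurable g →
        (∀ y : ℝ, g (-y) = -g y) →
        (∀ y : ℝ, |g y| ≤ M * Real.sqrt (1 + y ^ 2) ^ (-r)) →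
        ∀ x : ℝ, Real.sqrt (1 + x ^ 2) ^ r *
            ‖(∫ y : ℝ,
              (if 0 ≤ x - y then β * νm / γ * Complex.exp (νm * ((x - y : ℝ) : ℂ))
                else β * νp / γ * Complex.exp (νp * ((x - y : ℝ) : ℂ))) * (g y : ℂ))‖
          ≤ C * M * ‖γ‖ ^ (1 - r) := by
  set J := ∫ y : ℝ, √(1 + y ^ 2) ^ (1 - r)
  have hJ : 0 ≤ J := integral_nonneg fun y ↦ by positivity
  refine ⟨1 + ‖β‖ * C₁ ^ 2 * J * (1 + 2 * r / c) ^ r + 2 ^ (r + 1) * ‖β‖ * C₁ / c,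
    by positivity, ?_⟩
  intro γ νm νp hγ hγ₁ hνm hνp hνm_re hνp_re M g hM hg hodd hgM x
  have hbound := sqrt_one_add_sq_rpow_mul_norm_integral_le_of_odd
    (K := poleKernel β γ νm νp) (L := ‖β‖ * C₁ * (2 * C₁ * ‖γ‖)) measurable_poleKernel
    (norm_poleKernel_le hγ hνm hνp hνm_re hνp_re)
    (fun _ _ ↦ norm_poleKernel_sub_le hγ hνm hνp hνm_re hνp_re hc.le) (by positivity)
    (by positivity) hM.le hr hg hodd hgM x
  have hpow := mul_one_add_div_rpow_le hγ hγ₁ (b := 2 * r / c) (r := r) (by positivity)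
    (by linarith)
  have hinv : ‖γ‖⁻¹ ≤ ‖γ‖ ^ (1 - r) := by
    rw [← Real.rpow_neg_one]
    exact Real.rpow_le_rpow_of_exponent_ge hγ hγ₁ (by linarith)
  refine hbound.trans ?_
  calc M * (‖β‖ * C₁ * (2 * C₁ * ‖γ‖) * J * (1 + 2 * r / (c * ‖γ‖)) ^ r / 2 +
        2 ^ (r + 1) * (‖β‖ * C₁) / (c * ‖γ‖))
      = M * (‖β‖ * C₁ ^ 2 * J * (‖γ‖ * (1 + 2 * r / c / ‖γ‖) ^ r) +
          2 ^ (r + 1) * ‖β‖ * C₁ / c * ‖γ‖⁻¹) := by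
        rw [div_div]; field_simp
    _ ≤ M * (‖β‖ * C₁ ^ 2 * J * ((1 + 2 * r / c) ^ r * ‖γ‖ ^ (1 - r)) +
          2 ^ (r + 1) * ‖β‖ * C₁ / c * ‖γ‖ ^ (1 - r)) := by gcongr
    _ ≤ _ := by
        have : 0 ≤ M * ‖γ‖ ^ (1 - r) := by positivity
        nlinarith
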